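/- Suppose n is even. Let M be a matching of maximum weight among all matchings of size n/3 in G, and let N be a matching of maximum weight among all matchings of size n/2 in G. Then w(N) ≥ w(M) − w(M'''_1) − w(M_2) + w(X_1) + Σ_{xyz ∈ P*_2} max{w(xy), w(yz)} + w(X_3) + w(X_4). -/

import Mathlib

open Finset
open scoped Classical

namespace MW3PP

/-- A 3-path `xyz`: a path on three distinct vertices with middle vertex `y`. -/
structure P3 (V : Type*) where
  x : V
  y : V
  z : V
  hxy : x ≠ y
  hyz : y ≠ z
  hxz : x ≠ z

variable {V : Type*} [Fintype V] [DecidableEq V]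

/-- The vertex set of a 3-path. -/
def P3.verts (p : P3 V) : Finset V := {p.x, p.y, p.z}

/-- The two edges of a 3-path. -/
def P3.edges (p : P3 V) : Finset (Sym2 V) := {s(p.x, p.y), s(p.y, p.z)}

/-- The weight of a 3-path. -/
def P3.wt (w : Sym2 V → ℝ) (p : P3 V) : ℝ := w s(p.x, p.y) + w s(p.y, p.z)

/-- The total weight of a set of edges. -/
def ew (w : Sym2 V → ℝ) (F : Finset (Sym2 V)) : ℝ := ∑ e ∈ F, w e

/-- The total weight of a set of 3-paths. -/
def pw (w : Sym2 V → ℝ) (P : Finset (P3 V)) : ℝ := ∑ p ∈ P, p.wt w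

/-- `∑_{xyz ∈ S} max (w (xy)) (w (yz))`. -/
def maxSum (w : Sym2 V → ℝ) (S : Finset (P3 V)) : ℝ :=
  ∑ p ∈ S, max (w s(p.x, p.y)) (w s(p.y, p.z))

/-- A perfect 3-path packing: `n/3` pairwise vertex-disjoint 3-paths covering all vertices. -/
def IsPacking (P : Finset (P3 V)) : Prop :=
  P.card = Fintype.card V / 3 ∧
  (∀ p ∈ P, ∀ q ∈ P, p ≠ q → Disjoint p.verts q.verts) ∧
  (∀ v : V, ∃ p ∈ P, v ∈ p.verts)

/-- A maximum-weight perfect 3-path packing. -/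
def IsMaxPacking (w : Sym2 V → ℝ) (P : Finset (P3 V)) : Prop :=
  IsPacking P ∧ ∀ Q : Finset (P3 V), IsPacking Q → pw w Q ≤ pw w P

/-- A matching: a set of pairwise vertex-disjoint (non-loop) edges. -/
def IsMatching (M : Finset (Sym2 V)) : Prop :=
  (∀ e ∈ M, ¬ e.IsDiag) ∧
  ∀ e ∈ M, ∀ f ∈ M, e ≠ f → ∀ v : V, v ∈ e → v ∉ f

/-- A maximum-weight matching among all matchings of size `k`. -/
def IsMaxMatchingOfSize (w : Sym2 V → ℝ) (k : ℕ) (M : Finset (Sym2 V)) : Prop :=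
  IsMatching M ∧ M.card = k ∧
  ∀ M' : Finset (Sym2 V), IsMatching M' → M'.card = k → ew w M' ≤ ew w M

/-- `v ∈ V(M)` : vertex `v` is covered by the matching `M`. -/
def covered (M : Finset (Sym2 V)) (v : V) : Prop := ∃ e ∈ M, v ∈ e

/-- `e_u` : the edge of `M` containing `u` (junk value if there is none). -/
noncomputable def eMatch (M : Finset (Sym2 V)) (u : V) : Sym2 V :=
  if h : ∃ e ∈ M, u ∈ e then h.choose else s(u, u)

/-- The cost `c` of an edge with respect to a matching `M`:
`c(uv) = w(uv) - min (w (e_u)) (w (e_v))` if both endpoints are covered by `M`,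
and `c(uv) = w(uv)` otherwise. -/
noncomputable def cost (w : Sym2 V → ℝ) (M : Finset (Sym2 V)) : Sym2 V → ℝ :=
  Sym2.lift ⟨fun u v =>
    if covered M u ∧ covered M v then
      w s(u, v) - min (w (eMatch M u)) (w (eMatch M v))
    else w s(u, v), by
      intro u v
      dsimp only
      by_cases h : covered M u ∧ covered M v
      · rw [if_pos h, if_pos (show covered M v ∧ covered M u from ⟨h.2, h.1⟩),
          Sym2.eq_swap, min_comm]
      · rw [if_neg h, if_neg (show ¬(covered M v ∧ covered M u) from fun h' => h ⟨h'.2, h'.1⟩),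
          Sym2.eq_swap]⟩

/-- The total cost of a set of edges. -/
noncomputable def cw (w : Sym2 V → ℝ) (M F : Finset (Sym2 V)) : ℝ := ∑ e ∈ F, cost w M e

/-- The number of vertices of the 3-path `p` covered by `M`. -/
noncomputable def kcnt (M : Finset (Sym2 V)) (p : P3 V) : ℕ :=
  (p.verts.filter fun v => covered M v).card

/-- Exactly one of the two edges of `p` lies in `M`. -/
def exOne (M : Finset (Sym2 V)) (p : P3 V) : Prop :=
  (s(p.x, p.y) ∈ M ∧ s(p.y, p.z) ∉ M) ∨ (s(p.x, p.y) ∉ M ∧ s(p.y, p.z) ∈ M)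

def cls1 (M : Finset (Sym2 V)) (p : P3 V) : Prop := kcnt M p = 0
def cls2 (M : Finset (Sym2 V)) (p : P3 V) : Prop := kcnt M p = 1 ∧ ¬ covered M p.y
def cls3 (M : Finset (Sym2 V)) (p : P3 V) : Prop := kcnt M p = 1 ∧ covered M p.y
def cls4 (M : Finset (Sym2 V)) (p : P3 V) : Prop := kcnt M p = 2 ∧ ¬ covered M p.y
def cls5 (M : Finset (Sym2 V)) (p : P3 V) : Prop := kcnt M p = 2 ∧ covered M p.y ∧ exOne M p
def cls6 (M : Finset (Sym2 V)) (p : P3 V) : Prop :=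
  kcnt M p = 2 ∧ covered M p.y ∧ s(p.x, p.y) ∉ M ∧ s(p.y, p.z) ∉ M
def cls7 (M : Finset (Sym2 V)) (p : P3 V) : Prop := kcnt M p = 3 ∧ exOne M p
def cls8 (M : Finset (Sym2 V)) (p : P3 V) : Prop :=
  kcnt M p = 3 ∧ s(p.x, p.y) ∉ M ∧ s(p.y, p.z) ∉ M

/-- The subset of a set of 3-paths satisfying a predicate. -/
noncomputable def psel (P : Finset (P3 V)) (c : P3 V → Prop) : Finset (P3 V) := P.filter c

/-- The set of all edges of the 3-paths in `S`. -/
def Esub (S : Finset (P3 V)) : Finset (Sym2 V) := S.biUnion P3.edges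

/-- The heaviest edge of a 3-path (the edge `xy` in case of a tie). -/
noncomputable def heavy (w : Sym2 V → ℝ) (p : P3 V) : Sym2 V :=
  if w s(p.y, p.z) ≤ w s(p.x, p.y) then s(p.x, p.y) else s(p.y, p.z)

noncomputable def X1 (w : Sym2 V → ℝ) (P : Finset (P3 V)) (M : Finset (Sym2 V)) :
    Finset (Sym2 V) := (psel P (cls1 M)).image (heavy w)
noncomputable def X2 (P : Finset (P3 V)) (M : Finset (Sym2 V)) : Finset (Sym2 V) :=
  (psel P (cls2 M)).image fun p => if covered M p.x then s(p.x, p.y) else s(p.y, p.z)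
noncomputable def X3 (w : Sym2 V → ℝ) (P : Finset (P3 V)) (M : Finset (Sym2 V)) :
    Finset (Sym2 V) := (psel P (cls3 M)).image (heavy w)
noncomputable def X4 (w : Sym2 V → ℝ) (P : Finset (P3 V)) (M : Finset (Sym2 V)) :
    Finset (Sym2 V) := (psel P (cls4 M)).image (heavy w)
noncomputable def X5 (P : Finset (P3 V)) (M : Finset (Sym2 V)) : Finset (Sym2 V) :=
  (psel P (cls5 M)).image fun p => if s(p.x, p.y) ∈ M then s(p.y, p.z) else s(p.x, p.y)
noncomputable def X6 (P : Finset (P3 V)) (M : Finset (Sym2 V)) : Finset (Sym2 V) :=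
  (psel P (cls6 M)).image fun p => if covered M p.x then s(p.y, p.z) else s(p.x, p.y)
noncomputable def X7 (P : Finset (P3 V)) (M : Finset (Sym2 V)) : Finset (Sym2 V) :=
  (psel P (cls7 M)).image fun p => if s(p.x, p.y) ∈ M then s(p.y, p.z) else s(p.x, p.y)
noncomputable def X8 (w : Sym2 V → ℝ) (P : Finset (P3 V)) (M : Finset (Sym2 V)) :
    Finset (Sym2 V) := (psel P (cls8 M)).image (heavy w)

noncomputable def Y1 (w : Sym2 V → ℝ) (P : Finset (P3 V)) (M : Finset (Sym2 V)) :
    Finset (Sym2 V) := Esub (psel P (cls1 M)) \ X1 w P M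
noncomputable def Y2 (P : Finset (P3 V)) (M : Finset (Sym2 V)) : Finset (Sym2 V) :=
  Esub (psel P (cls2 M)) \ X2 P M
noncomputable def Y3 (w : Sym2 V → ℝ) (P : Finset (P3 V)) (M : Finset (Sym2 V)) :
    Finset (Sym2 V) := Esub (psel P (cls3 M)) \ X3 w P M
noncomputable def Y4 (w : Sym2 V → ℝ) (P : Finset (P3 V)) (M : Finset (Sym2 V)) :
    Finset (Sym2 V) := Esub (psel P (cls4 M)) \ X4 w P M
noncomputable def Y5 (P : Finset (P3 V)) (M : Finset (Sym2 V)) : Finset (Sym2 V) :=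
  Esub (psel P (cls5 M)) \ X5 P M
noncomputable def Y6 (P : Finset (P3 V)) (M : Finset (Sym2 V)) : Finset (Sym2 V) :=
  Esub (psel P (cls6 M)) \ X6 P M
noncomputable def Y7 (P : Finset (P3 V)) (M : Finset (Sym2 V)) : Finset (Sym2 V) :=
  Esub (psel P (cls7 M)) \ X7 P M
noncomputable def Y8 (w : Sym2 V → ℝ) (P : Finset (P3 V)) (M : Finset (Sym2 V)) :
    Finset (Sym2 V) := Esub (psel P (cls8 M)) \ X8 w P M

/-- An edge is a middle edge (w.r.t. `M`) if exactly one of its endpoints lies in `V(M)`. -/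
def isMiddle (M : Finset (Sym2 V)) (e : Sym2 V) : Prop :=
  ∃ u v : V, e = s(u, v) ∧ covered M u ∧ ¬ covered M v

/-- Two edges share a vertex. -/
def shares (e f : Sym2 V) : Prop := ∃ v, v ∈ e ∧ v ∈ f

/-- `g` is a middle edge of some 3-path in `S`. -/
def middleIn (M : Finset (Sym2 V)) (S : Finset (P3 V)) (g : Sym2 V) : Prop :=
  (∃ p ∈ S, g ∈ p.edges) ∧ isMiddle M g

/-- The 3-paths of `P` lying in classes 2, 3 or 4. -/
noncomputable def P234 (P : Finset (P3 V)) (M : Finset (Sym2 V)) : Finset (P3 V) :=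
  psel P fun p => cls2 M p ∨ cls3 M p ∨ cls4 M p

/-- `M_1`: edges of `M` sharing a vertex with at least one middle edge of a 3-path of `P*_6`. -/
noncomputable def Mset1 (P : Finset (P3 V)) (M : Finset (Sym2 V)) : Finset (Sym2 V) :=
  M.filter fun f => ∃ g, middleIn M (psel P (cls6 M)) g ∧ shares f g

/-- `M_2`: edges of `M` sharing a vertex with at least one middle edge, all middle edges met
belonging to 3-paths of `P*_2 ∪ P*_3 ∪ P*_4`. -/
noncomputable def Mset2 (P : Finset (P3 V)) (M : Finset (Sym2 V)) : Finset (Sym2 V) :=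
  M.filter fun f =>
    (∃ g, middleIn M P g ∧ shares f g) ∧
    ∀ g, middleIn M P g → shares f g → middleIn M (P234 P M) g

/-- `M_3 = M ∩ E(P*_7)`. -/
noncomputable def Mset3 (P : Finset (P3 V)) (M : Finset (Sym2 V)) : Finset (Sym2 V) :=
  M ∩ Esub (psel P (cls7 M))

/-- `M_4 = M ∩ E(P*_5)`. -/
noncomputable def Mset4 (P : Finset (P3 V)) (M : Finset (Sym2 V)) : Finset (Sym2 V) :=
  M ∩ Esub (psel P (cls5 M))

/-- The middle edges of 3-paths of `P*_6`. -/
noncomputable def mid6 (P : Finset (P3 V)) (M : Finset (Sym2 V)) : Finset (Sym2 V) :=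
  (Esub (psel P (cls6 M))).filter (isMiddle M)

/-- `M'_1`: edges of `M_1` meeting exactly one middle edge of a 3-path of `P*_6` and
no middle edge of a 3-path of `P*_2 ∪ P*_3 ∪ P*_4`. -/
noncomputable def Mset1' (P : Finset (P3 V)) (M : Finset (Sym2 V)) : Finset (Sym2 V) :=
  (Mset1 P M).filter fun f =>
    ((mid6 P M).filter fun g => shares f g).card = 1 ∧
    ∀ g, middleIn M (P234 P M) g → ¬ shares f g

/-- `M''_1`: edges of `M_1` meeting two middle edges of 3-paths of `P*_6`. -/
noncomputable def Mset1'' (P : Finset (P3 V)) (M : Finset (Sym2 V)) : Finset (Sym2 V) :=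
  (Mset1 P M).filter fun f => ((mid6 P M).filter fun g => shares f g).card = 2

/-- `M'''_1`: edges of `M_1` meeting exactly one middle edge of a 3-path of `P*_6` and
at least one middle edge of a 3-path of `P*_2 ∪ P*_3 ∪ P*_4`. -/
noncomputable def Mset1''' (P : Finset (P3 V)) (M : Finset (Sym2 V)) : Finset (Sym2 V) :=
  (Mset1 P M).filter fun f =>
    ((mid6 P M).filter fun g => shares f g).card = 1 ∧
    ∃ g, middleIn M (P234 P M) g ∧ shares f g

/-- Assumption on `P*`: for every 3-path `xyz ∈ P*` with `y ∉ V(M)` and `x, z ∈ V(M)`,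
the vertices `x` and `z` lie in two distinct edges of `M`. -/
def Ass (P : Finset (P3 V)) (M : Finset (Sym2 V)) : Prop :=
  ∀ p ∈ P, ¬ covered M p.y → covered M p.x → covered M p.z →
    ∃ e ∈ M, ∃ f ∈ M, p.x ∈ e ∧ p.z ∈ f ∧ e ≠ f

/-- An admissible edge w.r.t. `M`: either both endpoints are in `V(M)` and lie in two distinct
edges of `M`, or exactly one endpoint is in `V(M)`. -/
def goodEdge (M : Finset (Sym2 V)) (e : Sym2 V) : Prop :=
  (∃ u v : V, e = s(u, v) ∧ covered M u ∧ covered M v ∧ ∀ f ∈ M, ¬(u ∈ f ∧ v ∈ f)) ∨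
  (∃ u v : V, e = s(u, v) ∧ covered M u ∧ ¬ covered M v)


end MW3PP

/-!
Delete from `M` the edges of `M'''_1 ∪ M_2` and add the heavier edge of every 3-path of
`P*_1 ∪ ⋯ ∪ P*_4`. An edge of `M` meeting a middle edge of a 3-path of `P*_2 ∪ P*_3 ∪ P*_4`
meets no middle edge of `P*_5` (the edge of `M` on such a path meets no other path) and at most
one of `P*_6` (its other endpoint lies on a single path, which has a single middle edge), so it
lies in `M'''_1 ∪ M_2`; hence the result is a matching, and its weight is the left-hand side.
Both ends of a path of `P*_4` are covered by `M'''_1 ∪ M_2`, and counting the vertices of `V(M)`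
along `P*` gives `3|P*_1| + 2|P*_2| + 2|P*_3| + 2|M| ≤ n`; so the new matching has at most `n/2`
edges. Padding it with edges between uncovered vertices yields a matching of size `n/2` that is
no lighter.
-/

namespace MW3PP

variable {V : Type*}

lemma isMiddle_mk_iff {M : Finset (Sym2 V)} {a b : V} :
    isMiddle M s(a, b) ↔ (covered M a ∧ ¬ covered M b) ∨ (covered M b ∧ ¬ covered M a) := by
  constructor
  · rintro ⟨u, v, he, hu, hv⟩
    rcases Sym2.eq_iff.1 he with ⟨rfl, rfl⟩ | ⟨rfl, rfl⟩ <;> tauto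
  · rintro (⟨ha, hb⟩ | ⟨hb, ha⟩)
    · exact ⟨a, b, rfl, ha, hb⟩
    · exact ⟨b, a, Sym2.eq_swap, hb, ha⟩

lemma isMiddle_of_mem {M : Finset (Sym2 V)} {g : Sym2 V} {u v : V} (hu : u ∈ g) (hv : v ∈ g)
    (hcu : covered M u) (hcv : ¬ covered M v) : isMiddle M g :=
  ⟨u, v, (Sym2.mem_and_mem_iff fun (h : u = v) => hcv (h ▸ hcu)).1 ⟨hu, hv⟩, hcu, hcv⟩

lemma P3.y_mem_heavy (w : Sym2 V → ℝ) (p : P3 V) : p.y ∈ heavy w p := by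
  unfold heavy; split <;> simp

lemma P3.weight_heavy (w : Sym2 V → ℝ) (p : P3 V) :
    w (heavy w p) = max (w s(p.x, p.y)) (w s(p.y, p.z)) := by
  unfold heavy; split
  · exact (max_eq_left ‹_›).symm
  · exact (max_eq_right (le_of_not_ge ‹_›)).symm

lemma ew_mono {w : Sym2 V → ℝ} (hw : ∀ e, 0 ≤ w e) {F F' : Finset (Sym2 V)} (h : F ⊆ F') :
    ew w F ≤ ew w F' :=
  Finset.sum_le_sum_of_subset_of_nonneg h fun e _ _ => hw e

lemma mem_psel {P : Finset (P3 V)} {c : P3 V → Prop} {p : P3 V} :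
    p ∈ psel P c ↔ p ∈ P ∧ c p :=
  mem_filter

namespace IsMatching

variable {M A : Finset (Sym2 V)}

lemma eq_of_mem (hM : IsMatching M) {e f : Sym2 V} (he : e ∈ M) (hf : f ∈ M) {v : V}
    (hve : v ∈ e) (hvf : v ∈ f) : e = f :=
  by_contra fun h => hM.2 e he f hf h v hve hvf

lemma mono (hM : IsMatching M) (hA : A ⊆ M) : IsMatching A :=
  ⟨fun e he => hM.1 e (hA he), fun e he f hf => hM.2 e (hA he) f (hA hf)⟩

variable [DecidableEq V]

lemma union {B : Finset (Sym2 V)} (hA : IsMatching A) (hB : IsMatching B)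
    (hAB : ∀ e ∈ A, ∀ f ∈ B, ∀ v ∈ e, v ∉ f) : IsMatching (A ∪ B) := by
  refine ⟨fun e he => (mem_union.1 he).elim (hA.1 e) (hB.1 e), fun e he f hf hef v hve hvf => ?_⟩
  rcases mem_union.1 he with he | he <;> rcases mem_union.1 hf with hf | hf
  · exact hA.2 e he f hf hef v hve hvf
  · exact hAB e he f hf v hve hvf
  · exact hAB f hf e he v hvf hve
  · exact hB.2 e he f hf hef v hve hvf

lemma insert (hM : IsMatching M) {a b : V} (hab : a ≠ b) (ha : ¬ covered M a)
    (hb : ¬ covered M b) : IsMatching (insert s(a, b) M) := by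
  rw [← singleton_union]
  refine union ⟨by simpa using hab, by simp⟩ hM fun e he f hf v hve hvf => ?_
  rw [mem_singleton.1 he, Sym2.mem_iff] at hve
  rcases hve with rfl | rfl
  · exact ha ⟨f, hf, hvf⟩
  · exact hb ⟨f, hf, hvf⟩

variable [Fintype V]

lemma card_covered (hM : IsMatching M) : #(univ.filter (covered M)) = 2 * #M := by
  have hcov : univ.filter (covered M) = M.biUnion Sym2.toFinset := by
    ext v; simp [covered]
  rw [hcov, card_biUnion, sum_congr rfl fun e he => Sym2.card_toFinset_of_not_isDiag e (hM.1 e he),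
    sum_const, smul_eq_mul, mul_comm]
  intro e he f hf hef
  exact disjoint_left.2 fun v hve hvf =>
    hM.2 e he f hf hef v (Sym2.mem_toFinset.1 hve) (Sym2.mem_toFinset.1 hvf)

lemma exists_superset_card (hM : IsMatching M) {k : ℕ} (hk : #M ≤ k)
    (hkV : 2 * k ≤ Fintype.card V) : ∃ M', IsMatching M' ∧ M ⊆ M' ∧ #M' = k := by
  obtain ⟨d, rfl⟩ := Nat.exists_eq_add_of_le hk
  induction d generalizing M with
  | zero => exact ⟨M, hM, subset_rfl, rfl⟩
  | succ d ih =>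
    have hfree : 1 < #(univ.filter fun v => ¬ covered M v) := by
      have := card_filter_add_card_filter_not (s := univ) (covered M)
      rw [hM.card_covered, card_univ] at this
      omega
    obtain ⟨a, ha, b, hb, hab⟩ := one_lt_card.1 hfree
    simp only [mem_filter, mem_univ, true_and] at ha hb
    have hnew : s(a, b) ∉ M := fun h => ha ⟨_, h, Sym2.mem_mk_left a b⟩
    obtain ⟨M', hM', hsub, hcard⟩ :=
      ih (hM.insert hab ha hb) (by rw [card_insert_of_notMem hnew]; omega)
        (by rw [card_insert_of_notMem hnew]; omega)
    exact ⟨M', hM', (subset_insert _ _).trans hsub,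
      by rw [hcard, card_insert_of_notMem hnew, add_assoc, add_comm 1]⟩

end IsMatching

section

variable [DecidableEq V]

lemma ew_union {w : Sym2 V → ℝ} {A B : Finset (Sym2 V)} (h : Disjoint A B) :
    ew w (A ∪ B) = ew w A + ew w B :=
  sum_union h

lemma ew_sdiff {w : Sym2 V → ℝ} {A M : Finset (Sym2 V)} (h : A ⊆ M) :
    ew w (M \ A) = ew w M - ew w A :=
  eq_sub_of_add_eq (sum_sdiff h)

namespace P3

variable (p : P3 V)

lemma mem_verts {v : V} : v ∈ p.verts ↔ v = p.x ∨ v = p.y ∨ v = p.z := by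
  simp [verts]

lemma mem_edges {e : Sym2 V} : e ∈ p.edges ↔ e = s(p.x, p.y) ∨ e = s(p.y, p.z) := by
  simp [edges]

lemma card_verts : #p.verts = 3 := by
  simp [verts, p.hxy, p.hyz, p.hxz]

lemma mem_verts_of_mem_edges {e : Sym2 V} (he : e ∈ p.edges) {v : V} (hv : v ∈ e) :
    v ∈ p.verts := by
  rcases p.mem_edges.1 he with rfl | rfl <;> rcases Sym2.mem_iff.1 hv with rfl | rfl <;>
    simp [mem_verts]

lemma not_isDiag_of_mem_edges {e : Sym2 V} (he : e ∈ p.edges) : ¬ e.IsDiag := by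
  rcases p.mem_edges.1 he with rfl | rfl <;> simp [p.hxy, p.hyz]

lemma heavy_mem_edges (w : Sym2 V → ℝ) : heavy w p ∈ p.edges := by
  unfold heavy; split <;> simp [mem_edges]

lemma kcnt_eq (M : Finset (Sym2 V)) :
    kcnt M p = (if covered M p.x then 1 else 0) + (if covered M p.y then 1 else 0) +
      (if covered M p.z then 1 else 0) := by
  rw [kcnt, verts, card_filter, sum_insert (by simp [p.hxy, p.hxz]),
    sum_insert (by simp [p.hyz]), sum_singleton, add_assoc]

end P3

namespace IsPacking

variable [Fintype V] {P P' : Finset (P3 V)}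

lemma eq_of_mem_verts (hP : IsPacking P) {p q : P3 V} (hp : p ∈ P) (hq : q ∈ P) {v : V}
    (hvp : v ∈ p.verts) (hvq : v ∈ q.verts) : p = q :=
  by_contra fun h => disjoint_left.1 (hP.2.1 p hp q hq h) hvp hvq

lemma eq_of_mem_edges (hP : IsPacking P) {p q : P3 V} (hp : p ∈ P) (hq : q ∈ P) {e : Sym2 V}
    (hep : e ∈ p.edges) (heq : e ∈ q.edges) : p = q := by
  induction e using Sym2.ind with
  | _ a b =>
    exact hP.eq_of_mem_verts hp hq (p.mem_verts_of_mem_edges hep (Sym2.mem_mk_left a b))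
      (q.mem_verts_of_mem_edges heq (Sym2.mem_mk_left a b))

lemma injOn_heavy (hP : IsPacking P) (w : Sym2 V → ℝ) : Set.InjOn (heavy w) P :=
  fun p hp q hq h => hP.eq_of_mem_verts hp hq (p.mem_verts.2 (Or.inr (Or.inl rfl)))
    (q.mem_verts_of_mem_edges (q.heavy_mem_edges w) (h ▸ p.y_mem_heavy w))

lemma card_biUnion (hP : IsPacking P) (hP' : P' ⊆ P) {g : P3 V → Finset V}
    (hg : ∀ p ∈ P', g p ⊆ p.verts) : #(P'.biUnion g) = ∑ p ∈ P', #(g p) :=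
  Finset.card_biUnion fun p hp q hq hpq =>
    (hP.2.1 p (hP' hp) q (hP' hq) hpq).mono (hg p hp) (hg q hq)

lemma biUnion_verts (hP : IsPacking P) : P.biUnion P3.verts = univ :=
  eq_univ_of_forall fun v => mem_biUnion.2 (hP.2.2 v)

lemma card_eq (hP : IsPacking P) : Fintype.card V = 3 * #P := by
  rw [← card_univ, ← hP.biUnion_verts, hP.card_biUnion subset_rfl fun _ _ => subset_rfl]
  simp [P3.card_verts, mul_comm]

lemma sum_kcnt (hP : IsPacking P) {M : Finset (Sym2 V)} (hM : IsMatching M) :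
    ∑ p ∈ P, kcnt M p = 2 * #M := by
  rw [← hM.card_covered, ← hP.biUnion_verts, filter_biUnion,
    hP.card_biUnion subset_rfl fun p _ => filter_subset _ p.verts]
  rfl

lemma isMatching_image (hP : IsPacking P) (hP' : P' ⊆ P) {g : P3 V → Sym2 V}
    (hg : ∀ p, g p ∈ p.edges) : IsMatching (P'.image g) := by
  constructor
  · intro e he
    obtain ⟨p, -, rfl⟩ := mem_image.1 he
    exact p.not_isDiag_of_mem_edges (hg p)
  · intro e he f hf hef v hve hvf
    obtain ⟨p, hp, rfl⟩ := mem_image.1 he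
    obtain ⟨q, hq, rfl⟩ := mem_image.1 hf
    exact hef (congrArg g (hP.eq_of_mem_verts (hP' hp) (hP' hq)
      (p.mem_verts_of_mem_edges (hg p) hve) (q.mem_verts_of_mem_edges (hg q) hvf)))

end IsPacking

section Classes

variable {M : Finset (Sym2 V)} {p : P3 V}

lemma not_covered_of_cls1 (h : cls1 M p) {v : V} (hv : v ∈ p.verts) : ¬ covered M v :=
  filter_eq_empty_iff.1 (card_eq_zero.1 h) hv

lemma covered_of_cls4 (h : cls4 M p) : covered M p.x ∧ covered M p.z := by
  obtain ⟨hk, hy⟩ := h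
  rw [p.kcnt_eq M] at hk
  split_ifs at hk <;> simp_all

lemma exists_not_covered_of_cls1234 (h : cls1 M p ∨ cls2 M p ∨ cls3 M p ∨ cls4 M p)
    {g : Sym2 V} (hg : g ∈ p.edges) : ∃ v ∈ g, ¬ covered M v := by
  have hfree : ¬ covered M p.y ∨ (¬ covered M p.x ∧ ¬ covered M p.z) := by
    rcases h with h | h | ⟨hk, hy⟩ | h
    · exact Or.inl (not_covered_of_cls1 h (by simp [P3.mem_verts]))
    · exact Or.inl h.2
    · rw [p.kcnt_eq M] at hk
      split_ifs at hk <;> simp_all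
    · exact Or.inl h.2
  rcases p.mem_edges.1 hg with rfl | rfl <;> rcases hfree with hy | ⟨hx, hz⟩
  exacts [⟨p.y, by simp, hy⟩, ⟨p.x, by simp, hx⟩, ⟨p.y, by simp, hy⟩, ⟨p.z, by simp, hz⟩]

lemma not_cls234 (hk : kcnt M p = 2) (hy : covered M p.y) :
    ¬ (cls2 M p ∨ cls3 M p ∨ cls4 M p) := by
  rintro (h | h | h) <;> simp_all [cls2, cls3, cls4]

lemma cls234_or_cls5_or_cls6 {g : Sym2 V} (hg : g ∈ p.edges) (hmid : isMiddle M g) :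
    (cls2 M p ∨ cls3 M p ∨ cls4 M p) ∨ cls5 M p ∨ cls6 M p := by
  have hxy : s(p.x, p.y) ∈ M → covered M p.x ∧ covered M p.y := fun h =>
    ⟨⟨_, h, Sym2.mem_mk_left _ _⟩, ⟨_, h, Sym2.mem_mk_right _ _⟩⟩
  have hyz : s(p.y, p.z) ∈ M → covered M p.y ∧ covered M p.z := fun h =>
    ⟨⟨_, h, Sym2.mem_mk_left _ _⟩, ⟨_, h, Sym2.mem_mk_right _ _⟩⟩
  unfold cls2 cls3 cls4 cls5 cls6 exOne
  rw [p.kcnt_eq M]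
  rcases p.mem_edges.1 hg with rfl | rfl <;> rw [isMiddle_mk_iff] at hmid <;>
    by_cases hx : covered M p.x <;> by_cases hy : covered M p.y <;>
    by_cases hz : covered M p.z <;> simp_all <;> tauto

lemma eq_of_isMiddle_of_cls6 (h : cls6 M p) {g₁ g₂ : Sym2 V} (hg₁ : g₁ ∈ p.edges)
    (hg₂ : g₂ ∈ p.edges) (hm₁ : isMiddle M g₁) (hm₂ : isMiddle M g₂) : g₁ = g₂ := by
  obtain ⟨hk, hy, -⟩ := h
  rw [p.kcnt_eq M] at hk
  rcases p.mem_edges.1 hg₁ with rfl | rfl <;> rcases p.mem_edges.1 hg₂ with rfl | rfl <;>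
    simp_all [isMiddle_mk_iff]

lemma mem_verts_of_cls5 (hM : IsMatching M) (h : cls5 M p) {f : Sym2 V} (hf : f ∈ M) {v : V}
    (hvf : v ∈ f) (hvp : v ∈ p.verts) {u : V} (hu : u ∈ f) : u ∈ p.verts := by
  obtain ⟨hk, hy, hex⟩ := h
  rw [p.kcnt_eq M] at hk
  have hv : covered M v := ⟨f, hf, hvf⟩
  rcases hex with ⟨he, -⟩ | ⟨-, he⟩
  · have hx : covered M p.x := ⟨_, he, Sym2.mem_mk_left _ _⟩
    have hvxy : v ∈ s(p.x, p.y) := by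
      rcases p.mem_verts.1 hvp with rfl | rfl | rfl <;> split_ifs at hk <;> simp_all
    rw [hM.eq_of_mem hf he hvf hvxy] at hu
    exact p.mem_verts_of_mem_edges (p.mem_edges.2 (Or.inl rfl)) hu
  · have hz : covered M p.z := ⟨_, he, Sym2.mem_mk_right _ _⟩
    have hvyz : v ∈ s(p.y, p.z) := by
      rcases p.mem_verts.1 hvp with rfl | rfl | rfl <;> split_ifs at hk <;> simp_all
    rw [hM.eq_of_mem hf he hvf hvyz] at hu
    exact p.mem_verts_of_mem_edges (p.mem_edges.2 (Or.inr rfl)) hu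

lemma cls123_count_add_kcnt_le (M : Finset (Sym2 V)) (p : P3 V) :
    3 * (if cls1 M p then 1 else 0) + 2 * (if cls2 M p then 1 else 0) +
      2 * (if cls3 M p then 1 else 0) + kcnt M p ≤ 3 := by
  have : kcnt M p ≤ 3 := p.card_verts ▸ card_filter_le _ _
  unfold cls1 cls2 cls3
  split_ifs <;> simp_all

end Classes

section MiddleEdges

variable {P : Finset (P3 V)} {M : Finset (Sym2 V)} {f g : Sym2 V}

lemma mem_P234 {p : P3 V} : p ∈ P234 P M ↔ p ∈ P ∧ (cls2 M p ∨ cls3 M p ∨ cls4 M p) :=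
  mem_psel

lemma mem_mid6 : g ∈ mid6 P M ↔ middleIn M (psel P (cls6 M)) g := by
  simp [mid6, middleIn, Esub]

variable [Fintype V]

lemma Mset1'''_subset : Mset1''' P M ⊆ M :=
  (filter_subset _ _).trans (filter_subset _ _)

lemma Mset2_subset : Mset2 P M ⊆ M :=
  filter_subset _ _

lemma card_mid6_sharing_le_one (hP : IsPacking P) (hf : f ∈ M)
    (hg : middleIn M (P234 P M) g) (hfg : shares f g) :
    #((mid6 P M).filter fun g' => shares f g') ≤ 1 := by
  obtain ⟨⟨p, hp, hgp⟩, -⟩ := hg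
  obtain ⟨hpP, hp234⟩ := mem_P234.1 hp
  obtain ⟨u, huf, hug⟩ := hfg
  obtain ⟨u', rfl⟩ : ∃ u', f = s(u, u') := ⟨_, (Sym2.other_spec huf).symm⟩
  -- `u` lies on `p`, which is not in `P*_6`, so a middle edge of `P*_6` can only meet `f` in `u'`
  have hmid6 : ∀ g' ∈ (mid6 P M).filter fun g' => shares s(u, u') g',
      ∃ q ∈ P, cls6 M q ∧ g' ∈ q.edges ∧ isMiddle M g' ∧ u' ∈ g' := by
    intro g' hg'
    obtain ⟨hg'6, v, hvf, hvg'⟩ := mem_filter.1 hg'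
    obtain ⟨⟨q, hq, hg'q⟩, hmid'⟩ := mem_mid6.1 hg'6
    obtain ⟨hqP, hq6⟩ := mem_psel.1 hq
    refine ⟨q, hqP, hq6, hg'q, hmid', ?_⟩
    rcases Sym2.mem_iff.1 hvf with rfl | rfl
    · obtain rfl := hP.eq_of_mem_verts hqP hpP (q.mem_verts_of_mem_edges hg'q hvg')
        (p.mem_verts_of_mem_edges hgp hug)
      exact absurd hp234 (not_cls234 hq6.1 hq6.2.1)
    · exact hvg'
  refine card_le_one.2 fun g₁ h₁ g₂ h₂ => ?_
  obtain ⟨q₁, hq₁, h6, hg₁, hm₁, hu₁⟩ := hmid6 g₁ h₁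
  obtain ⟨q₂, hq₂, -, hg₂, hm₂, hu₂⟩ := hmid6 g₂ h₂
  obtain rfl := hP.eq_of_mem_verts hq₁ hq₂ (q₁.mem_verts_of_mem_edges hg₁ hu₁)
    (q₂.mem_verts_of_mem_edges hg₂ hu₂)
  exact eq_of_isMiddle_of_cls6 h6 hg₁ hg₂ hm₁ hm₂

lemma mem_Mset1'''_union_Mset2 (hP : IsPacking P) (hM : IsMatching M) (hf : f ∈ M)
    (hg : middleIn M (P234 P M) g) (hfg : shares f g) : f ∈ Mset1''' P M ∪ Mset2 P M := by
  obtain ⟨⟨p, hp, hgp⟩, hmid⟩ := hg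
  obtain ⟨hpP, hp234⟩ := mem_P234.1 hp
  rcases Nat.le_one_iff_eq_zero_or_eq_one.1
    (card_mid6_sharing_le_one hP hf ⟨⟨p, hp, hgp⟩, hmid⟩ hfg) with h0 | h1
  · refine mem_union_right _ (mem_filter.2 ⟨hf, ⟨g, ⟨⟨p, hpP, hgp⟩, hmid⟩, hfg⟩, ?_⟩)
    rintro g' ⟨⟨q, hq, hg'q⟩, hmid'⟩ hfg'
    rcases cls234_or_cls5_or_cls6 hg'q hmid' with h | h | h
    · exact ⟨⟨q, mem_P234.2 ⟨hq, h⟩, hg'q⟩, hmid'⟩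
    · -- `f` is the edge of `M` on `q`, so `q` meets `p`
      obtain ⟨u, huf, hug⟩ := hfg
      obtain ⟨v, hvf, hvg'⟩ := hfg'
      obtain rfl := hP.eq_of_mem_verts hq hpP
        (mem_verts_of_cls5 hM h hf hvf (q.mem_verts_of_mem_edges hg'q hvg') huf)
        (p.mem_verts_of_mem_edges hgp hug)
      exact absurd hp234 (not_cls234 h.1 h.2.1)
    · have : g' ∈ (mid6 P M).filter fun g' => shares f g' :=
        mem_filter.2 ⟨mem_mid6.2 ⟨⟨q, mem_psel.2 ⟨hq, h⟩, hg'q⟩, hmid'⟩, hfg'⟩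
      simp [card_eq_zero.1 h0] at this
  · refine mem_union_left _ (mem_filter.2 ⟨mem_filter.2 ⟨hf, ?_⟩, h1, g, ⟨⟨p, hp, hgp⟩, hmid⟩, hfg⟩)
    obtain ⟨g'', hg''⟩ := card_pos.1 (h1 ▸ Nat.one_pos)
    obtain ⟨hg''6, hfg''⟩ := mem_filter.1 hg''
    exact ⟨g'', mem_mid6.1 hg''6, hfg''⟩

lemma disjoint_Mset1'''_Mset2 (hP : IsPacking P) : Disjoint (Mset1''' P M) (Mset2 P M) := by
  refine disjoint_left.2 fun f h1 h2 => ?_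
  obtain ⟨-, hcard, -⟩ := mem_filter.1 h1
  obtain ⟨g, hg⟩ := card_pos.1 (hcard ▸ Nat.one_pos)
  obtain ⟨hg6, hfg⟩ := mem_filter.1 hg
  obtain ⟨⟨q, hq, hgq⟩, hmid⟩ := mem_mid6.1 hg6
  obtain ⟨hqP, hq6⟩ := mem_psel.1 hq
  obtain ⟨⟨r, hr, hgr⟩, -⟩ := (mem_filter.1 h2).2.2 g ⟨⟨q, hqP, hgq⟩, hmid⟩ hfg
  obtain ⟨hrP, hr234⟩ := mem_P234.1 hr
  obtain rfl := hP.eq_of_mem_edges hqP hrP hgq hgr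
  exact not_cls234 hq6.1 hq6.2.1 hr234

end MiddleEdges

noncomputable def lowPaths (P : Finset (P3 V)) (M : Finset (Sym2 V)) : Finset (P3 V) :=
  psel P (cls1 M) ∪ psel P (cls2 M) ∪ psel P (cls3 M) ∪ psel P (cls4 M)

noncomputable def exchangeMatching [Fintype V] (w : Sym2 V → ℝ) (P : Finset (P3 V))
    (M : Finset (Sym2 V)) : Finset (Sym2 V) :=
  (M \ (Mset1''' P M ∪ Mset2 P M)) ∪ (lowPaths P M).image (heavy w)

section Exchange

variable {P : Finset (P3 V)} {M : Finset (Sym2 V)}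

lemma mem_lowPaths {p : P3 V} :
    p ∈ lowPaths P M ↔ p ∈ P ∧ (cls1 M p ∨ cls2 M p ∨ cls3 M p ∨ cls4 M p) := by
  simp only [lowPaths, mem_union, mem_psel]
  tauto

lemma lowPaths_subset : lowPaths P M ⊆ P :=
  fun _ hp => (mem_lowPaths.1 hp).1

lemma heavy_not_mem_of_mem_lowPaths (w : Sym2 V → ℝ) {p : P3 V} (hp : p ∈ lowPaths P M) :
    heavy w p ∉ M := by
  obtain ⟨v, hv, hvM⟩ :=
    exists_not_covered_of_cls1234 (mem_lowPaths.1 hp).2 (p.heavy_mem_edges w)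
  exact fun h => hvM ⟨_, h, hv⟩

lemma maxSum_lowPaths (w : Sym2 V → ℝ) :
    maxSum w (lowPaths P M) = maxSum w (psel P (cls1 M)) + maxSum w (psel P (cls2 M)) +
      maxSum w (psel P (cls3 M)) + maxSum w (psel P (cls4 M)) := by
  have hd : ∀ c c' : P3 V → Prop, (∀ p, c p → ¬ c' p) → Disjoint (psel P c) (psel P c') :=
    fun _ _ h => disjoint_filter.2 fun p _ => h p
  have h12 := hd (cls1 M) (cls2 M) (by simp_all [cls1, cls2])
  have h13 := hd (cls1 M) (cls3 M) (by simp_all [cls1, cls3])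
  have h14 := hd (cls1 M) (cls4 M) (by simp_all [cls1, cls4])
  have h23 := hd (cls2 M) (cls3 M) (by simp_all [cls2, cls3])
  have h24 := hd (cls2 M) (cls4 M) (by simp_all [cls2, cls4])
  have h34 := hd (cls3 M) (cls4 M) (by simp_all [cls3, cls4])
  rw [maxSum, lowPaths,
    sum_union (disjoint_union_left.2 ⟨disjoint_union_left.2 ⟨h14, h24⟩, h34⟩),
    sum_union (disjoint_union_left.2 ⟨h13, h23⟩), sum_union h12]
  rfl

variable [Fintype V]

lemma ew_image_heavy (w : Sym2 V → ℝ) (hP : IsPacking P) {P' : Finset (P3 V)} (hP' : P' ⊆ P) :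
    ew w (P'.image (heavy w)) = maxSum w P' := by
  rw [ew, sum_image fun p hp q hq h => hP.injOn_heavy w (hP' hp) (hP' hq) h]
  exact sum_congr rfl fun p _ => p.weight_heavy w

lemma isMatching_exchangeMatching (w : Sym2 V → ℝ) (hP : IsPacking P) (hM : IsMatching M) :
    IsMatching (exchangeMatching w P M) := by
  refine (hM.mono sdiff_subset).union
    (hP.isMatching_image lowPaths_subset fun p => p.heavy_mem_edges w) ?_
  intro f hf e he v hvf hve
  obtain ⟨p, hp, rfl⟩ := mem_image.1 he
  obtain ⟨hpP, hcls⟩ := mem_lowPaths.1 hp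
  obtain ⟨hfM, hfAB⟩ := mem_sdiff.1 hf
  have hv : covered M v := ⟨f, hfM, hvf⟩
  rcases hcls with h1 | h234
  · exact not_covered_of_cls1 h1 (p.mem_verts_of_mem_edges (p.heavy_mem_edges w) hve) hv
  · obtain ⟨u, hu, huM⟩ := exists_not_covered_of_cls1234 (Or.inr h234) (p.heavy_mem_edges w)
    exact hfAB (mem_Mset1'''_union_Mset2 hP hM hfM
      ⟨⟨p, mem_P234.2 ⟨hpP, h234⟩, p.heavy_mem_edges w⟩, isMiddle_of_mem hve hu hv huM⟩
      ⟨v, hvf, hve⟩)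

lemma ew_exchangeMatching (w : Sym2 V → ℝ) (hP : IsPacking P) :
    ew w (exchangeMatching w P M) = ew w M - ew w (Mset1''' P M) - ew w (Mset2 P M) +
      ew w (X1 w P M) + maxSum w (psel P (cls2 M)) + ew w (X3 w P M) + ew w (X4 w P M) := by
  have hdisj : Disjoint (M \ (Mset1''' P M ∪ Mset2 P M)) ((lowPaths P M).image (heavy w)) := by
    refine disjoint_right.2 fun e he h => ?_
    obtain ⟨p, hp, rfl⟩ := mem_image.1 he
    exact heavy_not_mem_of_mem_lowPaths w hp (mem_sdiff.1 h).1
  have hsel : ∀ c, psel P c ⊆ P := fun _ => filter_subset _ _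
  rw [exchangeMatching, ew_union hdisj, ew_sdiff (union_subset Mset1'''_subset Mset2_subset),
    ew_union (disjoint_Mset1'''_Mset2 hP), ew_image_heavy w hP lowPaths_subset, maxSum_lowPaths,
    X1, X3, X4, ew_image_heavy w hP (hsel _), ew_image_heavy w hP (hsel _),
    ew_image_heavy w hP (hsel _)]
  ring

lemma card_cls4_le (hP : IsPacking P) (hM : IsMatching M) :
    #(psel P (cls4 M)) ≤ #(Mset1''' P M ∪ Mset2 P M) := by
  have hsub : Mset1''' P M ∪ Mset2 P M ⊆ M := union_subset Mset1'''_subset Mset2_subset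
  -- both ends of a 3-path of `P*_4` lie on middle edges, so they are covered by `M'''_1 ∪ M_2`
  have hends : (psel P (cls4 M)).biUnion (fun p => {p.x, p.z}) ⊆
      univ.filter (covered (Mset1''' P M ∪ Mset2 P M)) := by
    intro v hv
    obtain ⟨p, hp, hv⟩ := mem_biUnion.1 hv
    obtain ⟨hpP, h4⟩ := mem_psel.1 hp
    obtain ⟨hx, hz⟩ := covered_of_cls4 h4
    obtain ⟨g, hg, hvg, hyg, e, he, hve⟩ : ∃ g ∈ p.edges, v ∈ g ∧ p.y ∈ g ∧ covered M v := by
      rcases mem_insert.1 hv with rfl | hv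
      · exact ⟨s(p.x, p.y), by simp [P3.mem_edges], by simp, by simp, hx⟩
      · rw [mem_singleton.1 hv]
        exact ⟨s(p.y, p.z), by simp [P3.mem_edges], by simp, by simp, hz⟩
    have hmid : middleIn M (P234 P M) g :=
      ⟨⟨p, mem_P234.2 ⟨hpP, Or.inr (Or.inr h4)⟩, hg⟩, isMiddle_of_mem hvg hyg ⟨e, he, hve⟩ h4.2⟩
    exact mem_filter.2 ⟨mem_univ _, e, mem_Mset1'''_union_Mset2 hP hM he hmid ⟨v, hve, hvg⟩, hve⟩
  have hcard := card_le_card hends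
  rw [hP.card_biUnion (fun _ hp => (mem_psel.1 hp).1) fun p _ => by simp [insert_subset_iff, P3.mem_verts],
    sum_congr rfl fun p _ => card_pair p.hxz, sum_const, smul_eq_mul,
    (hM.mono hsub).card_covered] at hcard
  omega

lemma card_cls123_le (hP : IsPacking P) (hM : IsMatching M) :
    3 * #(psel P (cls1 M)) + 2 * #(psel P (cls2 M)) + 2 * #(psel P (cls3 M)) + 2 * #M ≤
      Fintype.card V := by
  calc _ = ∑ p ∈ P, (3 * (if cls1 M p then 1 else 0) + 2 * (if cls2 M p then 1 else 0) +
          2 * (if cls3 M p then 1 else 0) + kcnt M p) := by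
        simp only [sum_add_distrib, ← mul_sum, ← card_filter, hP.sum_kcnt hM]
        rfl
    _ ≤ ∑ _p ∈ P, 3 := sum_le_sum fun p _ => cls123_count_add_kcnt_le M p
    _ = Fintype.card V := by rw [sum_const, smul_eq_mul, hP.card_eq, mul_comm]

lemma two_mul_card_exchangeMatching_le (w : Sym2 V → ℝ) (hP : IsPacking P) (hM : IsMatching M) :
    2 * #(exchangeMatching w P M) ≤ Fintype.card V := by
  have hsub : Mset1''' P M ∪ Mset2 P M ⊆ M := union_subset Mset1'''_subset Mset2_subset
  have hF : #(exchangeMatching w P M) ≤ #M - #(Mset1''' P M ∪ Mset2 P M) + #(lowPaths P M) := by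
    refine (card_union_le _ _).trans_eq ?_
    rw [card_sdiff_of_subset hsub, card_image_of_injOn fun p hp q hq h =>
      hP.injOn_heavy w (lowPaths_subset hp) (lowPaths_subset hq) h]
  have hlow : #(lowPaths P M) ≤
      #(psel P (cls1 M)) + #(psel P (cls2 M)) + #(psel P (cls3 M)) + #(psel P (cls4 M)) := by
    have := card_union_le (psel P (cls1 M) ∪ psel P (cls2 M) ∪ psel P (cls3 M)) (psel P (cls4 M))
    have := card_union_le (psel P (cls1 M) ∪ psel P (cls2 M)) (psel P (cls3 M))
    have := card_union_le (psel P (cls1 M)) (psel P (cls2 M))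
    rw [lowPaths]
    omega
  have := card_le_card hsub
  have := card_cls4_le hP hM
  have := card_cls123_le hP hM
  omega

end Exchange

end

variable [Fintype V] [DecidableEq V]

theorem statement_10_general (n : ℕ) (hn : Fintype.card V = n)
    (w : Sym2 V → ℝ) (hw : ∀ e : Sym2 V, 0 ≤ w e)
    (M : Finset (Sym2 V)) (hM : IsMaxMatchingOfSize w (n / 3) M)
    (N : Finset (Sym2 V)) (hN : IsMaxMatchingOfSize w (n / 2) N)
    (Pstar : Finset (P3 V)) (hP : IsMaxPacking w Pstar) :
    ew w M - ew w (Mset1''' Pstar M) - ew w (Mset2 Pstar M) + ew w (X1 w Pstar M) +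
      maxSum w (psel Pstar (cls2 M)) + ew w (X3 w Pstar M) + ew w (X4 w Pstar M) ≤
      ew w N := by
  have hcard := two_mul_card_exchangeMatching_le w hP.1 hM.1
  obtain ⟨F, hF, hsub, hFcard⟩ := (isMatching_exchangeMatching w hP.1 hM.1).exists_superset_card
    (k := n / 2) (by omega) (by omega)
  calc _ = ew w (exchangeMatching w Pstar M) := (ew_exchangeMatching w hP.1).symm
    _ ≤ ew w F := ew_mono hw hsub
    _ ≤ ew w N := hN.2.2 F hF hFcard

theorem statement_10 (n : ℕ) (hn : Fintype.card V = n) (h3 : 3 ∣ n) (h2 : 2 ∣ n)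
    (w : Sym2 V → ℝ) (hw : ∀ e : Sym2 V, 0 ≤ w e)
    (M : Finset (Sym2 V)) (hM : IsMaxMatchingOfSize w (n / 3) M)
    (N : Finset (Sym2 V)) (hN : IsMaxMatchingOfSize w (n / 2) N)
    (Pstar : Finset (P3 V)) (hP : IsMaxPacking w Pstar) (hAss : Ass Pstar M) :
    ew w M - ew w (Mset1''' Pstar M) - ew w (Mset2 Pstar M) + ew w (X1 w Pstar M) +
      maxSum w (psel Pstar (cls2 M)) + ew w (X3 w Pstar M) + ew w (X4 w Pstar M) ≤
      ew w N :=
  statement_10_general n hn w hw M hM N hN Pstar hP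

end MW3PP
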